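/- arXiv:1904.02337 — 2 statements merged into one kernel-verified Lean document; each statement's English description precedes it below -/
import Mathlib

section
/- Let d ≥ 1, n ≥ 2 be integers, let Z ⊆ ℝ^{dn}, let {Z_k}_{k≥1} be a sequence of subsets of ℝ^{dn} that strongly covers Z, and let {l_k} be a sequence of dyadic lengths converging to zero. For each k, let X_k ⊆ ℝ^d be a union of cubes of B_{l_k}^d, and assume that for every strongly non-diagonal cube I ∈ B_{l_k}^{dn}(Z_k), I is not contained in X_k^n. Then for any pairwise distinct points x_1, …, x_n ∈ ⋂_{k≥1} X_k, one has (x_1, …, x_n) ∉ Z. -/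
/-! If `x_1, …, x_n` are distinct and `l_k` is below their minimal mutual distance, the cube of
`B_{l_k}^{dn}` containing `(x_1, …, x_n)` is strongly non-diagonal, and each of its factors is the
cube of `B_{l_k}^d` containing `x_j ∈ X_k`, hence lies in the cube union `X_k`. Since the tuple lies
in `Z_k` for infinitely many `k`, some such `k` contradicts the avoidance hypothesis. -/

open Filter Set

noncomputable section

/-- A dyadic length: a real number of the form `2 ^ (-k)` for a natural number `k`. -/
def IsDyadicLength (l : ℝ) : Prop := ∃ k : ℕ, l = (2 : ℝ) ^ (-(k : ℤ))

/-- The half-open dyadic cube of sidelength `l` with corner `l • m`. -/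
def dyadicCube {ι : Type*} (l : ℝ) (m : ι → ℤ) : Set (ι → ℝ) :=
  {x | ∀ i, l * (m i : ℝ) ≤ x i ∧ x i < l * ((m i : ℝ) + 1)}

/-- The (indices of the) cubes of `B_l` that intersect `E`. -/
def cubesMeeting {ι : Type*} (l : ℝ) (E : Set (ι → ℝ)) : Set (ι → ℤ) :=
  {m | (dyadicCube l m ∩ E).Nonempty}

/-- `#B_l(E)`, the number of cubes of sidelength `l` meeting `E`. -/
def cubeCount {ι : Type*} (l : ℝ) (E : Set (ι → ℝ)) : ℕ :=
  (cubesMeeting l E).ncard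

/-- `E` is a union of cubes of `B_l`. -/
def IsCubeUnion {ι : Type*} (l : ℝ) (E : Set (ι → ℝ)) : Prop :=
  ∃ S : Set (ι → ℤ), E = ⋃ m ∈ S, dyadicCube l m

/-- Lower Minkowski dimension, computed along dyadic scales. -/
def lowerMinkDim {ι : Type*} (Z : Set (ι → ℝ)) : ℝ :=
  Filter.atTop.liminf fun k : ℕ =>
    Real.log (cubeCount ((2 : ℝ) ^ (-(k : ℤ))) Z) / (k * Real.log 2)

/-- The unit cube `[0,1)^d`. -/
def unitCube (d : ℕ) : Set (Fin d → ℝ) := {x | ∀ i, x i ∈ Set.Ico (0 : ℝ) 1}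

/-- `X^n`, viewed inside `ℝ^{dn} = (Fin n × Fin d → ℝ)`. -/
def nthPower {d n : ℕ} (X : Set (Fin d → ℝ)) : Set (Fin n × Fin d → ℝ) :=
  {y | ∀ j, (fun i => y (j, i)) ∈ X}

/-- The point `(x_1, …, x_n) ∈ ℝ^{dn}` built from `x_1, …, x_n ∈ ℝ^d`. -/
def tuple {d n : ℕ} (x : Fin n → Fin d → ℝ) : Fin n × Fin d → ℝ := fun p => x p.1 p.2

/-- The `j`-th factor of a cube index in `B_l^{dn}`. -/
def cubeRow {d n : ℕ} (M : Fin n × Fin d → ℤ) (j : Fin n) : Fin d → ℤ := fun i => M (j, i)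

/-- A cube of `B_l^{dn}` is strongly non-diagonal if its `n` factors are pairwise distinct. -/
def StronglyNonDiagonal {d n : ℕ} (M : Fin n × Fin d → ℤ) : Prop :=
  Function.Injective (cubeRow M)

lemma IsDyadicLength.pos {l : ℝ} (hl : IsDyadicLength l) : 0 < l := by
  obtain ⟨k, rfl⟩ := hl
  positivity

section DyadicCube

variable {ι : Type*} {l : ℝ}

lemma mem_dyadicCube_floor (hl : 0 < l) (x : ι → ℝ) :
    x ∈ dyadicCube l (fun i => ⌊x i / l⌋) := fun _ =>
  ⟨(le_div_iff₀' hl).mp (Int.floor_le _), (div_lt_iff₀' hl).mp (Int.lt_floor_add_one _)⟩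

lemma eq_of_mem_dyadicCube (hl : 0 < l) {x : ι → ℝ} {m m' : ι → ℤ}
    (h : x ∈ dyadicCube l m) (h' : x ∈ dyadicCube l m') : m = m' := by
  funext i
  have hlt : (m i : ℝ) < m' i + 1 := lt_of_mul_lt_mul_left ((h i).1.trans_lt (h' i).2) hl.le
  have hlt' : (m' i : ℝ) < m i + 1 := lt_of_mul_lt_mul_left ((h' i).1.trans_lt (h i).2) hl.le
  norm_cast at hlt hlt'
  omega

lemma dist_lt_of_mem_dyadicCube [Fintype ι] (hl : 0 < l) {x y : ι → ℝ} {m : ι → ℤ}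
    (hx : x ∈ dyadicCube l m) (hy : y ∈ dyadicCube l m) : dist x y < l := by
  refine (dist_pi_lt_iff hl).mpr fun i => ?_
  rw [Real.dist_eq, abs_sub_lt_iff]
  constructor <;> linarith [hx i, hy i]

lemma IsCubeUnion.dyadicCube_subset {E : Set (ι → ℝ)} (hE : IsCubeUnion l E) (hl : 0 < l)
    {x : ι → ℝ} {m : ι → ℤ} (hxE : x ∈ E) (hxm : x ∈ dyadicCube l m) :
    dyadicCube l m ⊆ E := by
  obtain ⟨S, rfl⟩ := hE
  obtain ⟨m', hm', hxm'⟩ := mem_iUnion₂.mp hxE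
  rw [← eq_of_mem_dyadicCube hl hxm' hxm]
  exact subset_biUnion_of_mem hm'

end DyadicCube

section Product

variable {d n : ℕ} {l : ℝ}

lemma mem_dyadicCube_iff_forall_cubeRow {y : Fin n × Fin d → ℝ} {M : Fin n × Fin d → ℤ} :
    y ∈ dyadicCube l M ↔ ∀ j, (fun i => y (j, i)) ∈ dyadicCube l (cubeRow M j) :=
  Prod.forall

lemma dyadicCube_subset_nthPower {M : Fin n × Fin d → ℤ} {X : Set (Fin d → ℝ)}
    (hX : ∀ j, dyadicCube l (cubeRow M j) ⊆ X) : dyadicCube l M ⊆ nthPower X :=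
  fun _ hy j => hX j (mem_dyadicCube_iff_forall_cubeRow.mp hy j)

lemma stronglyNonDiagonal_of_tuple_mem (hl : 0 < l) {x : Fin n → Fin d → ℝ}
    {M : Fin n × Fin d → ℤ} (hM : tuple x ∈ dyadicCube l M)
    (hsep : ∀ j j', j ≠ j' → l < dist (x j) (x j')) : StronglyNonDiagonal M := by
  intro j j' hjj'
  by_contra hne
  have hxj' := mem_dyadicCube_iff_forall_cubeRow.mp hM j'
  rw [← hjj'] at hxj'
  exact (hsep j j' hne).not_gt <|
    dist_lt_of_mem_dyadicCube hl (mem_dyadicCube_iff_forall_cubeRow.mp hM j) hxj'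

end Product

lemma eventually_lt_dist_of_injective {ι E : Type*} [Finite ι] [MetricSpace E] {x : ι → E}
    (hx : Function.Injective x) {l : ℕ → ℝ} (hl : Tendsto l atTop (nhds 0)) :
    ∀ᶠ k in atTop, ∀ j j', j ≠ j' → l k < dist (x j) (x j') := by
  simp only [eventually_all]
  exact fun j j' hjj' => hl.eventually_lt_const (dist_pos.mpr (hx.ne hjj'))

theorem strong_cover_avoidance_general (d n : ℕ)
    (Z : Set (Fin n × Fin d → ℝ)) (Zk : ℕ → Set (Fin n × Fin d → ℝ))
    (hcover : ∀ z ∈ Z, {k | z ∈ Zk k}.Infinite)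
    (l : ℕ → ℝ) (hldyadic : ∀ k, IsDyadicLength (l k))
    (hllim : Filter.Tendsto l Filter.atTop (nhds 0))
    (X : ℕ → Set (Fin d → ℝ)) (hXcube : ∀ k, IsCubeUnion (l k) (X k))
    (havoid : ∀ k, ∀ M : Fin n × Fin d → ℤ, StronglyNonDiagonal M →
      M ∈ cubesMeeting (l k) (Zk k) → ¬ dyadicCube (l k) M ⊆ nthPower (X k)) :
    ∀ x : Fin n → Fin d → ℝ, (∀ j, x j ∈ ⋂ k, X k) → Function.Injective x →
      tuple x ∉ Z := by
  intro x hx hinj hxZ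
  obtain ⟨k, hxZk, hsep⟩ := (Nat.frequently_atTop_iff_infinite.mpr (hcover _ hxZ)).and_eventually
    (eventually_lt_dist_of_injective hinj hllim) |>.exists
  have hl := (hldyadic k).pos
  let M : Fin n × Fin d → ℤ := fun p => ⌊tuple x p / l k⌋
  have hxM : tuple x ∈ dyadicCube (l k) M := mem_dyadicCube_floor hl _
  refine havoid k M (stronglyNonDiagonal_of_tuple_mem hl hxM hsep) ⟨_, hxM, hxZk⟩ ?_
  exact dyadicCube_subset_nthPower fun j => (hXcube k).dyadicCube_subset hl
    (mem_iInter.mp (hx j) k) (mem_dyadicCube_iff_forall_cubeRow.mp hxM j)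

/-- **Lemma 3.1.** If `{Z_k}` strongly covers `Z`, `l_k → 0`, each `X_k` is a union of cubes
of `B_{l_k}^d` whose `n`-fold power avoids the strongly non-diagonal cubes of
`B_{l_k}^{dn}(Z_k)`, then `⋂ X_k` contains no `n`-tuple of distinct points lying in `Z`. -/
theorem strong_cover_avoidance (d n : ℕ) (hd : 1 ≤ d) (hn : 2 ≤ n)
    (Z : Set (Fin n × Fin d → ℝ)) (Zk : ℕ → Set (Fin n × Fin d → ℝ))
    (hcover : ∀ z ∈ Z, {k | z ∈ Zk k}.Infinite)
    (l : ℕ → ℝ) (hldyadic : ∀ k, IsDyadicLength (l k))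
    (hllim : Filter.Tendsto l Filter.atTop (nhds 0))
    (X : ℕ → Set (Fin d → ℝ)) (hXcube : ∀ k, IsCubeUnion (l k) (X k))
    (havoid : ∀ k, ∀ M : Fin n × Fin d → ℤ, StronglyNonDiagonal M →
      M ∈ cubesMeeting (l k) (Zk k) → ¬ dyadicCube (l k) M ⊆ nthPower (X k)) :
    ∀ x : Fin n → Fin d → ℝ, (∀ j, x j ∈ ⋂ k, X k) → Function.Injective x →
      tuple x ∉ Z :=
  strong_cover_avoidance_general d n Z Zk hcover l hldyadic hllim X hXcube havoid

end
end

section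
/- Assume the Setup. Then for every ε > 0 there exists a constant C_ε > 0 such that for every dyadic length l ∈ (0,1] and every cube I ∈ B_l^d, μ(I) ≤ C_ε · l^{(dn−α)/(n−1) − ε}. Consequently, by Frostman's lemma, the set X = ⋂_k X_k on which μ is supported has Hausdorff dimension at least (dn−α)/(n−1). -/
open Filter Set

noncomputable section

/-!
Each cube of `B_{l_k}` kept in `X_k` receives at most the fraction `2 (r_k / l_{k-1})^d` of the
mass of its parent, and the conditions on `r_k` and `l_k` turn this into `μ(J) ≲ l_k^{s - 2ε_k}`
for `J ∈ B_{l_k}`, where `s = (dn-α)/(n-1)`. A cube of side `l'` with `l_k ≤ l' < l_{k-1}` meets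
one cube of `B_{r_k}` if `l' ≤ r_k` and `(l'/r_k)^d` of them otherwise, and each of those contains
at most one cube of `X_k`; counting, `μ(I) ≲ l'^{s - ε'}` as soon as `ε_k, ε_{k-1} ≤ ε'/2`.
Since `μ` is carried by `⋂ X_k`, the mass distribution principle gives the dimension bound.
-/

open MeasureTheory
open scoped ENNReal

section DyadicCubes

variable {ι : Type*}

def cubeIndex (l : ℝ) (x : ι → ℝ) : ι → ℤ := fun i => ⌊x i / l⌋

theorem mem_dyadicCube_iff {l : ℝ} (hl : 0 < l) {m : ι → ℤ} {x : ι → ℝ} :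
    x ∈ dyadicCube l m ↔ cubeIndex l x = m := by
  simp only [dyadicCube, cubeIndex, mem_ofPred_eq, funext_iff, Int.floor_eq_iff,
    le_div_iff₀ hl, div_lt_iff₀ hl, mul_comm l]

theorem mem_dyadicCube_cubeIndex {l : ℝ} (hl : 0 < l) (x : ι → ℝ) :
    x ∈ dyadicCube l (cubeIndex l x) :=
  (mem_dyadicCube_iff hl).2 rfl

theorem dyadicCube_nonempty {l : ℝ} (hl : 0 < l) (m : ι → ℤ) : (dyadicCube l m).Nonempty :=
  ⟨fun i => l * m i, (mem_dyadicCube_iff hl).2 <| funext fun i => by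
    simp [cubeIndex, mul_div_cancel_left₀ _ hl.ne']⟩

theorem cubeIndex_natCast_mul (l : ℝ) (N : ℕ) (x : ι → ℝ) :
    cubeIndex (N * l) x = fun i => cubeIndex l x i / N := by
  funext i
  rw [cubeIndex, cubeIndex, ← Int.floor_div_natCast, div_div, mul_comm l]

theorem mem_dyadicCube_natCast_mul_iff {l : ℝ} (hl : 0 < l) {N : ℕ} (hN : 0 < N)
    {m m' : ι → ℤ} {x : ι → ℝ} (hx : x ∈ dyadicCube l m') :
    x ∈ dyadicCube (N * l) m ↔ (fun i => m' i / (N : ℤ)) = m := by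
  rw [mem_dyadicCube_iff (by positivity), cubeIndex_natCast_mul, (mem_dyadicCube_iff hl).1 hx]

theorem dyadicCube_subset_natCast_mul {l : ℝ} (hl : 0 < l) {N : ℕ} (hN : 0 < N)
    (m : ι → ℤ) : dyadicCube l m ⊆ dyadicCube (N * l) (fun i => m i / (N : ℤ)) :=
  fun _ hx => (mem_dyadicCube_natCast_mul_iff hl hN hx).2 rfl

theorem dyadicCube_subset_of_inter_nonempty {l : ℝ} (hl : 0 < l) {N : ℕ} (hN : 0 < N)
    {m m' : ι → ℤ} (h : (dyadicCube l m' ∩ dyadicCube (N * l) m).Nonempty) :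
    dyadicCube l m' ⊆ dyadicCube (N * l) m := by
  obtain ⟨x, hx, hxm⟩ := h
  rw [← (mem_dyadicCube_natCast_mul_iff hl hN hx).1 hxm]
  exact dyadicCube_subset_natCast_mul hl hN m'

theorem cubesMeeting_natCast_mul_subset_singleton {l : ℝ} (hl : 0 < l) {N : ℕ} (hN : 0 < N)
    (m : ι → ℤ) : cubesMeeting (N * l) (dyadicCube l m) ⊆ {fun i => m i / (N : ℤ)} := by
  rintro m' ⟨x, hxm', hx⟩
  exact ((mem_dyadicCube_natCast_mul_iff hl hN hx).1 hxm').symm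

theorem cubesMeeting_dyadicCube_natCast_mul_subset [Fintype ι] [DecidableEq ι] {l : ℝ}
    (hl : 0 < l) {N : ℕ} (hN : 0 < N) (m : ι → ℤ) :
    cubesMeeting l (dyadicCube (N * l) m) ⊆
      Fintype.piFinset fun i => Finset.Ico (N * m i) (N * m i + N) := by
  rintro m' ⟨x, hxm', hx⟩
  have hm := (mem_dyadicCube_natCast_mul_iff hl hN hxm').1 hx
  have hN' : (0 : ℤ) < N := by exact_mod_cast hN
  simp only [Fintype.coe_piFinset, Set.mem_pi, Set.mem_univ,
    Finset.coe_Ico, Set.mem_Ico, forall_const]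
  intro i
  have h₁ := Int.ediv_mul_le (m' i) hN'.ne'
  have h₂ := Int.lt_ediv_add_one_mul_self (m' i) hN'
  rw [congrFun hm i] at h₁ h₂
  constructor <;> linarith

theorem cubeCount_dyadicCube_natCast_mul_le [Fintype ι] {l : ℝ} (hl : 0 < l) {N : ℕ}
    (hN : 0 < N) (m : ι → ℤ) :
    cubeCount l (dyadicCube (N * l) m) ≤ N ^ Fintype.card ι := by
  classical
  calc cubeCount l (dyadicCube (N * l) m)
      ≤ (Fintype.piFinset fun i => Finset.Ico ((N : ℤ) * m i) (N * m i + N)).card := by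
        rw [cubeCount, ← Set.ncard_coe_finset]
        exact Set.ncard_le_ncard (cubesMeeting_dyadicCube_natCast_mul_subset hl hN m)
          (Finset.finite_toSet _)
    _ = N ^ Fintype.card ι := by simp [Fintype.card_piFinset]

end DyadicCubes

namespace IsDyadicLength

theorem pos_s7 {x : ℝ} (hx : IsDyadicLength x) : 0 < x := by
  obtain ⟨k, rfl⟩ := hx
  positivity

theorem le_one {x : ℝ} (hx : IsDyadicLength x) : x ≤ 1 := by
  obtain ⟨k, rfl⟩ := hx
  exact zpow_le_one_of_nonpos₀ one_le_two (by omega)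

theorem exists_eq_natCast_mul {x y : ℝ} (hx : IsDyadicLength x) (hy : IsDyadicLength y)
    (hxy : x ≤ y) : ∃ N : ℕ, 0 < N ∧ y = N * x := by
  obtain ⟨a, rfl⟩ := hx
  obtain ⟨b, rfl⟩ := hy
  have hba : b ≤ a := by
    by_contra! h
    exact (zpow_lt_zpow_right₀ one_lt_two (by omega : -(b : ℤ) < -(a : ℤ))).not_ge hxy
  refine ⟨2 ^ (a - b), by positivity, ?_⟩
  rw [Nat.cast_pow, Nat.cast_ofNat, ← zpow_natCast, ← zpow_add₀ two_ne_zero]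
  congr 1
  omega

end IsDyadicLength

theorem unitCube_eq_dyadicCube (d : ℕ) : unitCube d = dyadicCube 1 0 := by
  ext x
  simp [unitCube, dyadicCube]

theorem dyadicCube_subset_unitCube_or_disjoint {d : ℕ} {l : ℝ} (hl : IsDyadicLength l)
    (m : Fin d → ℤ) : dyadicCube l m ⊆ unitCube d ∨ Disjoint (dyadicCube l m) (unitCube d) := by
  obtain ⟨N, hN, hN1⟩ := hl.exists_eq_natCast_mul ⟨0, by simp⟩ hl.le_one
  rw [unitCube_eq_dyadicCube, hN1]
  by_cases h : (dyadicCube l m ∩ dyadicCube (N * l) 0).Nonempty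
  · exact Or.inl (dyadicCube_subset_of_inter_nonempty hl.pos_s7 hN h)
  · exact Or.inr (Set.disjoint_iff_inter_eq_empty.2 (Set.not_nonempty_iff_eq_empty.1 h))

section Counting

variable {ι : Type*}

theorem cubesMeeting_mono {l : ℝ} {E F : Set (ι → ℝ)} (h : E ⊆ F) :
    cubesMeeting l E ⊆ cubesMeeting l F :=
  fun _ ⟨x, hxm, hx⟩ => ⟨x, hxm, h hx⟩

theorem cubesMeeting_dyadicCube_finite [Fintype ι] {l L : ℝ} (hl : IsDyadicLength l)
    (hL : IsDyadicLength L) (m : ι → ℤ) : (cubesMeeting l (dyadicCube L m)).Finite := by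
  classical
  rcases le_total l L with h | h
  · obtain ⟨N, hN, rfl⟩ := hl.exists_eq_natCast_mul hL h
    exact (Finset.finite_toSet _).subset (cubesMeeting_dyadicCube_natCast_mul_subset hl.pos_s7 hN m)
  · obtain ⟨N, hN, rfl⟩ := hL.exists_eq_natCast_mul hl h
    exact (Set.finite_singleton _).subset (cubesMeeting_natCast_mul_subset_singleton hL.pos_s7 hN m)

theorem cubeCount_dyadicCube_le_one {l r : ℝ} (hl : IsDyadicLength l) (hr : IsDyadicLength r)
    (hlr : l ≤ r) (I : ι → ℤ) : cubeCount r (dyadicCube l I) ≤ 1 := by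
  obtain ⟨N, hN, rfl⟩ := hl.exists_eq_natCast_mul hr hlr
  simpa [cubeCount] using Set.ncard_le_ncard (cubesMeeting_natCast_mul_subset_singleton hl.pos_s7 hN I)

theorem cubeCount_inter_le_of_separated {l r : ℝ} (hl : IsDyadicLength l)
    (hr : IsDyadicLength r) (hlr : l ≤ r) {E A : Set (ι → ℝ)}
    (hsep : ∀ m' : ι → ℤ, ∀ m₁ ∈ cubesMeeting l E, ∀ m₂ ∈ cubesMeeting l E,
      dyadicCube l m₁ ⊆ dyadicCube r m' → dyadicCube l m₂ ⊆ dyadicCube r m' → m₁ = m₂)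
    (hA : (cubesMeeting r A).Finite) : cubeCount l (E ∩ A) ≤ cubeCount r A := by
  obtain ⟨N, hN, rfl⟩ := hl.exists_eq_natCast_mul hr hlr
  have hsub := dyadicCube_subset_natCast_mul hl.pos_s7 hN (ι := ι)
  refine Set.ncard_le_ncard_of_injOn (fun m i => m i / (N : ℤ)) ?_ ?_ hA
  · rintro m ⟨x, hxm, -, hxA⟩
    exact ⟨x, hsub m hxm, hxA⟩
  · rintro m₁ ⟨x₁, hx₁, hx₁E, -⟩ m₂ ⟨x₂, hx₂, hx₂E, -⟩ h
    exact hsep _ m₁ ⟨x₁, hx₁, hx₁E⟩ m₂ ⟨x₂, hx₂, hx₂E⟩ (hsub m₁)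
      (by simpa only [← h] using hsub m₂)

theorem measure_dyadicCube_le_cubeCount_mul [Fintype ι] {μ : Measure (ι → ℝ)}
    {E : Set (ι → ℝ)} (hE : μ Eᶜ = 0) {l L : ℝ} (hl : IsDyadicLength l) (hL : IsDyadicLength L)
    {c : ℝ≥0∞} (hc : ∀ J, μ (dyadicCube l J) ≤ c) (I : ι → ℤ) :
    μ (dyadicCube L I) ≤ cubeCount l (E ∩ dyadicCube L I) * c := by
  have hfin := (cubesMeeting_dyadicCube_finite hl hL I).subset
    (cubesMeeting_mono (l := l) (inter_subset_right (s := E)))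
  have hcover : E ∩ dyadicCube L I ⊆ ⋃ J ∈ hfin.toFinset, dyadicCube l J := fun x hx =>
    mem_biUnion (hfin.mem_toFinset.2 ⟨x, mem_dyadicCube_cubeIndex hl.pos_s7 x, hx⟩)
      (mem_dyadicCube_cubeIndex hl.pos_s7 x)
  calc μ (dyadicCube L I)
      ≤ μ (dyadicCube L I ∩ E) + μ (dyadicCube L I \ E) := measure_le_inter_add_sdiff _ _ _
    _ = μ (E ∩ dyadicCube L I) := by
        rw [measure_mono_null (sdiff_subset_compl _ _) hE, add_zero, inter_comm]
    _ ≤ ∑ J ∈ hfin.toFinset, μ (dyadicCube l J) :=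
        (measure_mono hcover).trans (measure_biUnion_finset_le _ _)
    _ ≤ hfin.toFinset.card * c := by
        simpa only [nsmul_eq_mul] using Finset.sum_le_card_nsmul _ _ c fun J _ => hc J
    _ = cubeCount l (E ∩ dyadicCube L I) * c := by
        rw [cubeCount, Set.ncard_eq_toFinset_card _ hfin]

theorem measure_dyadicCube_le_of_separated [Fintype ι] {μ : Measure (ι → ℝ)}
    {E : Set (ι → ℝ)} (hE : μ Eᶜ = 0) {l r L : ℝ} (hl : IsDyadicLength l)
    (hr : IsDyadicLength r) (hL : IsDyadicLength L) (hlr : l ≤ r)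
    (hsep : ∀ m' : ι → ℤ, ∀ m₁ ∈ cubesMeeting l E, ∀ m₂ ∈ cubesMeeting l E,
      dyadicCube l m₁ ⊆ dyadicCube r m' → dyadicCube l m₂ ⊆ dyadicCube r m' → m₁ = m₂)
    {c : ℝ≥0∞} (hc : ∀ J, μ (dyadicCube l J) ≤ c) (I : ι → ℤ) :
    μ (dyadicCube L I) ≤ cubeCount r (dyadicCube L I) * c :=
  (measure_dyadicCube_le_cubeCount_mul hE hl hL hc I).trans <| by
    gcongr
    exact cubeCount_inter_le_of_separated hl hr hlr hsep (cubesMeeting_dyadicCube_finite hr hL I)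

end Counting

theorem isProbabilityMeasure_of_compl_eq_zero {α : Type*} [MeasurableSpace α] {μ : Measure α}
    {s : Set α} (h₁ : μ s = 1) (h₂ : μ sᶜ = 0) : IsProbabilityMeasure μ :=
  ⟨le_antisymm (by simpa [h₁, h₂] using measure_univ_le_add_compl (μ := μ) s)
    (h₁ ▸ measure_mono (subset_univ _))⟩

theorem measure_ne_zero_of_compl_eq_zero {α : Type*} [MeasurableSpace α] {μ : Measure α}
    [IsProbabilityMeasure μ] {s : Set α} (h : μ sᶜ = 0) : μ s ≠ 0 := fun h₀ => by
  simpa [h₀, h] using measure_univ_le_add_compl (μ := μ) s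

section Construction

variable {d : ℕ} {μ : Measure (Fin d → ℝ)}

theorem measure_compl_eq_zero_of_null_cubes {l L : ℝ} (hl : IsDyadicLength l)
    (hL : IsDyadicLength L) (hlL : l ≤ L) (hμ : μ (unitCube d)ᶜ = 0) {E : Set (Fin d → ℝ)}
    (hnull : ∀ J, dyadicCube l J ⊆ unitCube d → ∀ I, dyadicCube l J ⊆ dyadicCube L I →
      ¬ dyadicCube l J ⊆ E → μ (dyadicCube l J) = 0) :
    μ Eᶜ = 0 := by
  obtain ⟨N, hN, rfl⟩ := hl.exists_eq_natCast_mul hL hlL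
  have hcover : Eᶜ ⊆ (unitCube d)ᶜ ∪
      ⋃ J ∈ {J | dyadicCube l J ⊆ unitCube d ∧ ¬ dyadicCube l J ⊆ E}, dyadicCube l J := by
    intro x hxE
    by_cases hx : x ∈ unitCube d
    · have hxJ := mem_dyadicCube_cubeIndex hl.pos_s7 x
      refine Or.inr (mem_biUnion ⟨?_, fun h => hxE (h hxJ)⟩ hxJ)
      exact (dyadicCube_subset_unitCube_or_disjoint hl _).resolve_right
        (Set.not_disjoint_iff.2 ⟨x, hxJ, hx⟩)
    · exact Or.inl hx
  refine measure_mono_null hcover (measure_union_null hμ ?_)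
  exact (measure_biUnion_null_iff (Set.to_countable _)).2 fun J hJ =>
    hnull J hJ.1 _ (dyadicCube_subset_natCast_mul hl.pos_s7 hN J) hJ.2

theorem measure_dyadicCube_le_of_parent {l L r : ℝ} (hl : IsDyadicLength l)
    (hL : IsDyadicLength L) (hlL : l ≤ L) (hr : 0 < r) {X Y : Set (Fin d → ℝ)} (hXY : X ⊆ Y)
    (hμ : μ (unitCube d)ᶜ = 0)
    (hlarge : ∀ m ∈ cubesMeeting L Y,
      (1 / 2) * (L / r) ^ d ≤ (cubeCount l (X ∩ dyadicCube L m) : ℝ))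
    (hrec : ∀ J : Fin d → ℤ, dyadicCube l J ⊆ unitCube d →
      ∀ I : Fin d → ℤ, dyadicCube l J ⊆ dyadicCube L I →
        (dyadicCube l J ⊆ X →
          μ (dyadicCube l J) = μ (dyadicCube L I) / (cubeCount l (X ∩ dyadicCube L I) : ℝ≥0∞)) ∧
        (¬ dyadicCube l J ⊆ X → μ (dyadicCube l J) = 0))
    {c : ℝ≥0∞} (hc : ∀ I, μ (dyadicCube L I) ≤ c) (J : Fin d → ℤ) :
    μ (dyadicCube l J) ≤ ENNReal.ofReal (2 * (r / L) ^ d) * c := by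
  rcases dyadicCube_subset_unitCube_or_disjoint hl J with hJu | hJu
  swap
  · rw [measure_mono_null (hJu.subset_compl_right) hμ]
    exact zero_le
  obtain ⟨N, hN, hNl⟩ := hl.exists_eq_natCast_mul hL hlL
  have hJI := hNl ▸ dyadicCube_subset_natCast_mul hl.pos_s7 hN J
  by_cases hJX : dyadicCube l J ⊆ X
  swap
  · rw [(hrec J hJu _ hJI).2 hJX]
    exact zero_le
  rw [(hrec J hJu _ hJI).1 hJX]
  set I : Fin d → ℤ := fun i => J i / (N : ℤ)
  obtain ⟨x, hx⟩ := dyadicCube_nonempty hl.pos_s7 J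
  have hq : 0 < 1 / 2 * (L / r) ^ d := by have := hL.pos_s7; positivity
  have hcount : ENNReal.ofReal (1 / 2 * (L / r) ^ d) ≤ cubeCount l (X ∩ dyadicCube L I) := by
    rw [← ENNReal.ofReal_natCast]
    exact ENNReal.ofReal_le_ofReal (hlarge I ⟨x, hJI hx, hXY (hJX hx)⟩)
  have hinv : (1 / 2 * (L / r) ^ d)⁻¹ = 2 * (r / L) ^ d := by
    rw [mul_inv, ← inv_pow, inv_div, inv_div, div_one]
  calc μ (dyadicCube L I) / cubeCount l (X ∩ dyadicCube L I)
      ≤ c / ENNReal.ofReal (1 / 2 * (L / r) ^ d) := ENNReal.div_le_div (hc I) hcount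
    _ = ENNReal.ofReal (2 * (r / L) ^ d) * c := by
        rw [div_eq_mul_inv, ← ENNReal.ofReal_inv_of_pos hq, hinv, mul_comm]

end Construction

section Exponents

theorem rpow_le_rpow_of_le_of_exponent_ge {x y a b : ℝ} (hx : 0 < x) (hxy : x ≤ y) (hy : y ≤ 1)
    (ha : 0 ≤ a) (hba : b ≤ a) : x ^ a ≤ y ^ b :=
  (Real.rpow_le_rpow hx.le hxy ha).trans
    (Real.rpow_le_rpow_of_exponent_ge (hx.trans_le hxy) hy hba)

theorem div_pow_le_mul_rpow {d : ℕ} (hd : 0 < d) {n α ε C₀ l L r : ℝ} (hn : 2 ≤ n) (hε : 0 ≤ ε)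
    (hC₀ : 0 ≤ C₀) (hl : 0 < l) (hl1 : l ≤ 1) (hL : 0 < L) (hr : 0 ≤ r)
    (hquad : l ^ ε ≤ L ^ (2 * (d : ℝ)))
    (hrsize : r ≤ C₀ * l ^ ((d * n - α - ε) / (d * (n - 1)))) :
    (r / L) ^ d ≤ C₀ ^ d * l ^ ((d * n - α) / (n - 1) - 2 * ε) := by
  set β := (d * n - α - ε) / (d * (n - 1))
  have hLd : l ^ (ε / 2) ≤ L ^ (d : ℝ) := by
    have h := Real.rpow_le_rpow (by positivity) hquad (by norm_num : (0 : ℝ) ≤ 1 / 2)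
    rwa [← Real.rpow_mul hl.le, ← Real.rpow_mul hL.le, mul_one_div,
      show 2 * (d : ℝ) * (1 / 2) = d by ring] at h
  have hexp : (d * n - α) / (n - 1) - 2 * ε ≤ β * d - ε / 2 := by
    have hβ : β * d = (d * n - α) / (n - 1) - ε / (n - 1) := by
      have : (d : ℝ) ≠ 0 := by positivity
      rw [← sub_div, mul_comm, ← mul_div_assoc, mul_div_mul_left _ _ this]
    have : ε / (n - 1) ≤ ε := div_le_self hε (by linarith)
    linarith
  calc (r / L) ^ d = r ^ d / L ^ (d : ℝ) := by rw [div_pow, Real.rpow_natCast]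
    _ ≤ (C₀ * l ^ β) ^ d / l ^ (ε / 2) :=
        div_le_div₀ (by positivity) (pow_le_pow_left₀ hr hrsize d) (by positivity) hLd
    _ = C₀ ^ d * l ^ (β * d - ε / 2) := by
        rw [mul_pow, ← Real.rpow_natCast (l ^ β), ← Real.rpow_mul hl.le, Real.rpow_sub hl,
          mul_div_assoc]
    _ ≤ C₀ ^ d * l ^ ((d * n - α) / (n - 1) - 2 * ε) := by
        gcongr C₀ ^ d * ?_
        exact Real.rpow_le_rpow_of_exponent_ge hl hl1 hexp

theorem div_pow_mul_div_pow_mul_rpow_le {d : ℕ} {l' r L s ε ε' : ℝ} (hl' : 0 < l') (hr : 0 < r)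
    (hl'L : l' ≤ L) (hL1 : L ≤ 1) (hsd : s - ε' ≤ d) (hε : 2 * ε ≤ ε') :
    (l' / r) ^ d * ((r / L) ^ d * L ^ (s - 2 * ε)) ≤ l' ^ (s - ε') := by
  have hL : 0 < L := hl'.trans_le hl'L
  have hq : l' / L ≤ 1 := (div_le_one hL).2 hl'L
  calc (l' / r) ^ d * ((r / L) ^ d * L ^ (s - 2 * ε))
      = (l' / L) ^ (d : ℝ) * L ^ (s - 2 * ε) := by
        rw [Real.rpow_natCast, ← mul_assoc, ← mul_pow, div_mul_div_cancel₀ hr.ne']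
    _ ≤ (l' / L) ^ (s - ε') * L ^ (s - ε') := by
        refine mul_le_mul (Real.rpow_le_rpow_of_exponent_ge (by positivity) hq hsd)
          (Real.rpow_le_rpow_of_exponent_ge hL hL1 (by linarith)) (by positivity) (by positivity)
    _ = l' ^ (s - ε') := by rw [Real.div_rpow hl'.le hL.le, div_mul_cancel₀ _ (by positivity)]

end Exponents

theorem exists_lt_mem_Ico_of_antitone {l : ℕ → ℝ} (hl : Antitone l)
    (hlim : Tendsto l atTop (nhds 0)) {K : ℕ} {x : ℝ} (hx : 0 < x) (hxK : x < l K) :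
    ∃ k, K < k ∧ l k ≤ x ∧ x < l (k - 1) := by
  classical
  have hex : ∃ k, l k ≤ x := ((hlim.eventually (gt_mem_nhds hx)).exists).imp fun _ => le_of_lt
  have hKk : K < Nat.find hex := by
    by_contra! h
    exact (hxK.trans_le (hl h)).not_ge (Nat.find_spec hex)
  exact ⟨Nat.find hex, hKk, Nat.find_spec hex, not_le.1 (Nat.find_min hex (by omega))⟩

section Frostman

variable {d : ℕ} {μ : Measure (Fin d → ℝ)}

theorem measure_dyadicCube_le_rpow_of_le_of_le {E : Set (Fin d → ℝ)} (hE : μ Eᶜ = 0)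
    {l r L l' : ℝ} (hl : IsDyadicLength l) (hr : IsDyadicLength r) (hl' : IsDyadicLength l')
    (hlr : l ≤ r) (hll' : l ≤ l') (hl'L : l' ≤ L) (hL1 : L ≤ 1)
    (hsep : ∀ m' : Fin d → ℤ, ∀ m₁ ∈ cubesMeeting l E, ∀ m₂ ∈ cubesMeeting l E,
      dyadicCube l m₁ ⊆ dyadicCube r m' → dyadicCube l m₂ ⊆ dyadicCube r m' → m₁ = m₂)
    {C₀ s ε ε₁ ε' : ℝ} (hC₀ : 0 ≤ C₀) (hε' : 0 ≤ ε') (hε : 2 * ε ≤ ε') (hε₁ : 2 * ε₁ ≤ ε')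
    (hε's : ε' ≤ s) (hsd : s ≤ d)
    (hlevel : ∀ J, μ (dyadicCube l J) ≤ ENNReal.ofReal (2 * C₀ ^ d * l ^ (s - 2 * ε)))
    (hstep : ∀ J, μ (dyadicCube l J) ≤
      ENNReal.ofReal (2 * (r / L) ^ d) * ENNReal.ofReal (2 * C₀ ^ d * L ^ (s - 2 * ε₁)))
    (I : Fin d → ℤ) :
    μ (dyadicCube l' I) ≤ ENNReal.ofReal (4 * C₀ ^ d * l' ^ (s - ε')) := by
  rcases le_total l' r with hl'r | hrl'
  · calc μ (dyadicCube l' I)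
        ≤ cubeCount r (dyadicCube l' I) * ENNReal.ofReal (2 * C₀ ^ d * l ^ (s - 2 * ε)) :=
          measure_dyadicCube_le_of_separated hE hl hr hl' hlr hsep hlevel I
      _ ≤ 1 * ENNReal.ofReal (2 * C₀ ^ d * l ^ (s - 2 * ε)) := by
          gcongr
          exact_mod_cast cubeCount_dyadicCube_le_one hl' hr hl'r I
      _ ≤ ENNReal.ofReal (4 * C₀ ^ d * l' ^ (s - ε')) := by
          rw [one_mul]
          have := hl'.pos_s7
          gcongr ENNReal.ofReal ?_
          calc 2 * C₀ ^ d * l ^ (s - 2 * ε) ≤ 2 * C₀ ^ d * l' ^ (s - ε') := by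
                gcongr
                exact rpow_le_rpow_of_le_of_exponent_ge hl.pos_s7 hll' hl'.le_one (by linarith)
                  (by linarith)
            _ ≤ 4 * C₀ ^ d * l' ^ (s - ε') := by gcongr; norm_num
  · obtain ⟨N, hN, hNr⟩ := hr.exists_eq_natCast_mul hl' hrl'
    have := hr.pos_s7
    have := hl'.pos_s7.trans_le hl'L
    have hN' : (N : ℝ) = l' / r := by rw [hNr, mul_div_cancel_right₀ _ hr.pos_s7.ne']
    calc μ (dyadicCube l' I)
        ≤ cubeCount r (dyadicCube l' I) *
            (ENNReal.ofReal (2 * (r / L) ^ d) * ENNReal.ofReal (2 * C₀ ^ d * L ^ (s - 2 * ε₁))) :=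
          measure_dyadicCube_le_of_separated hE hl hr hl' hlr hsep hstep I
      _ ≤ ((N ^ d : ℕ) : ℝ≥0∞) * (ENNReal.ofReal (2 * (r / L) ^ d) *
            ENNReal.ofReal (2 * C₀ ^ d * L ^ (s - 2 * ε₁))) := by
          gcongr
          rw [hNr]
          simpa using cubeCount_dyadicCube_natCast_mul_le hr.pos_s7 hN I
      _ = ENNReal.ofReal (4 * C₀ ^ d * ((l' / r) ^ d * ((r / L) ^ d * L ^ (s - 2 * ε₁)))) := by
          rw [← ENNReal.ofReal_natCast, ← ENNReal.ofReal_mul (by positivity),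
            ← ENNReal.ofReal_mul (by positivity), Nat.cast_pow, hN']
          ring_nf
      _ ≤ ENNReal.ofReal (4 * C₀ ^ d * l' ^ (s - ε')) := by
          gcongr
          exact div_pow_mul_div_pow_mul_rpow_le hl'.pos_s7 hr.pos_s7 hl'L hL1 (by linarith) hε₁

theorem exists_forall_measure_dyadicCube_le [IsProbabilityMeasure μ] {l r ε : ℕ → ℝ}
    {X : ℕ → Set (Fin d → ℝ)} {C₀ s : ℝ} (hC₀ : 0 ≤ C₀) (hsd : s ≤ d)
    (hεlim : Tendsto ε atTop (nhds 0))
    (hldyadic : ∀ k, IsDyadicLength (l k)) (hlanti : Antitone l)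
    (hllim : Tendsto l atTop (nhds 0))
    (hrdyadic : ∀ k, 1 ≤ k → IsDyadicLength (r k)) (hrlow : ∀ k, 1 ≤ k → l k ≤ r k)
    (hXnull : ∀ k, μ (X k)ᶜ = 0)
    (hXsep : ∀ k, 1 ≤ k → ∀ m' : Fin d → ℤ, ∀ m₁ ∈ cubesMeeting (l k) (X k),
      ∀ m₂ ∈ cubesMeeting (l k) (X k), dyadicCube (l k) m₁ ⊆ dyadicCube (r k) m' →
        dyadicCube (l k) m₂ ⊆ dyadicCube (r k) m' → m₁ = m₂)
    (hstep : ∀ k, 1 ≤ k → ∀ c : ℝ≥0∞, (∀ I, μ (dyadicCube (l (k - 1)) I) ≤ c) →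
      ∀ J, μ (dyadicCube (l k) J) ≤ ENNReal.ofReal (2 * (r k / l (k - 1)) ^ d) * c)
    (hlevel : ∀ k, 1 ≤ k → ∀ J,
      μ (dyadicCube (l k) J) ≤ ENNReal.ofReal (2 * C₀ ^ d * l k ^ (s - 2 * ε k)))
    (ε' : ℝ) (hε' : 0 < ε') : ∃ C : ℝ, 0 < C ∧ ∀ l' : ℝ, IsDyadicLength l' → ∀ I : Fin d → ℤ,
      μ (dyadicCube l' I) ≤ ENNReal.ofReal (C * l' ^ (s - ε')) := by
  by_cases hs : s ≤ ε'
  · refine ⟨1, one_pos, fun l' hl' I => prob_le_one.trans (ENNReal.one_le_ofReal.2 ?_)⟩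
    rw [one_mul]
    exact Real.one_le_rpow_of_pos_of_le_one_of_nonpos hl'.pos_s7 hl'.le_one (by linarith)
  rw [not_le] at hs
  obtain ⟨K, hK⟩ := eventually_atTop.1 (hεlim.eventually_lt_const (half_pos hε'))
  have hL := (hldyadic (K + 1)).pos_s7
  -- On the scales `l' ≥ l (K + 1)` the trivial bound `μ ≤ 1` suffices; a smaller `l'` lies
  -- between two levels beyond `K`, where `ε < ε' / 2`.
  refine ⟨max (4 * C₀ ^ d) (l (K + 1) ^ (ε' - s)),
    lt_max_of_lt_right (Real.rpow_pos_of_pos hL _), fun l' hl' I => ?_⟩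
  rcases le_or_gt (l (K + 1)) l' with hLl' | hl'L
  · refine prob_le_one.trans (ENNReal.one_le_ofReal.2 ?_)
    calc 1 = l (K + 1) ^ (ε' - s) * l (K + 1) ^ (s - ε') := by
          rw [← Real.rpow_add hL, sub_add_sub_cancel, sub_self, Real.rpow_zero]
      _ ≤ _ := mul_le_mul (le_max_right _ _) (Real.rpow_le_rpow hL.le hLl' (by linarith))
          (by positivity) ((Real.rpow_pos_of_pos hL _).le.trans (le_max_right _ _))
  obtain ⟨k, hKk, hkl', hl'k⟩ := exists_lt_mem_Ico_of_antitone hlanti hllim hl'.pos_s7 hl'L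
  have hk : 1 ≤ k := by omega
  have hk₁ : 1 ≤ k - 1 := by omega
  refine (measure_dyadicCube_le_rpow_of_le_of_le (hXnull k) (hldyadic k) (hrdyadic k hk) hl'
    (hrlow k hk) hkl' hl'k.le (hldyadic _).le_one (hXsep k hk) hC₀ hε'.le
    (by linarith [hK k (by omega)]) (by linarith [hK (k - 1) (by omega)]) hs.le hsd
    (hlevel k hk) (hstep k hk _ (hlevel (k - 1) hk₁)) I).trans ?_
  exact ENNReal.ofReal_le_ofReal
    (mul_le_mul_of_nonneg_right (le_max_left _ _) (Real.rpow_nonneg hl'.pos_s7.le _))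

end Frostman

section MassDistribution

variable {ι : Type*} [Fintype ι] {μ : Measure (ι → ℝ)} {t C : ℝ}

theorem cubeIndex_le_add_one {l : ℝ} (hl : 0 < l) {x y : ι → ℝ} (hxy : dist x y ≤ l) (i : ι) :
    cubeIndex l x i ≤ cubeIndex l y i + 1 := by
  have h := (dist_le_pi_dist x y i).trans hxy
  rw [Real.dist_eq, abs_le] at h
  rw [cubeIndex, cubeIndex, ← Int.floor_add_one]
  exact Int.floor_mono (by rw [div_add_one hl.ne', div_le_div_iff_of_pos_right hl]; linarith)

theorem measure_le_of_ediam_le_dyadic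
    (hμ : ∀ ρ, IsDyadicLength ρ → ∀ I, μ (dyadicCube ρ I) ≤ ENNReal.ofReal (C * ρ ^ t))
    {S : Set (ι → ℝ)} {ρ : ℝ} (hρ : IsDyadicLength ρ) (hS : Metric.ediam S ≤ ENNReal.ofReal ρ) :
    μ S ≤ 3 ^ Fintype.card ι * ENNReal.ofReal (C * ρ ^ t) := by
  classical
  rcases S.eq_empty_or_nonempty with rfl | ⟨y, hy⟩
  · simp
  set box := Fintype.piFinset fun i => Finset.Icc (cubeIndex ρ y i - 1) (cubeIndex ρ y i + 1)
  have hcover : S ⊆ ⋃ m ∈ box, dyadicCube ρ m := by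
    intro x hx
    have hxy : ∀ {x y}, x ∈ S → y ∈ S → dist x y ≤ ρ := fun hx hy => by
      rw [dist_edist, ← ENNReal.toReal_ofReal hρ.pos_s7.le]
      exact ENNReal.toReal_mono ENNReal.ofReal_ne_top
        ((Metric.edist_le_ediam_of_mem hx hy).trans hS)
    refine mem_biUnion (Fintype.mem_piFinset.2 fun i => Finset.mem_Icc.2 ⟨?_, ?_⟩)
      (mem_dyadicCube_cubeIndex hρ.pos_s7 x)
    · linarith [cubeIndex_le_add_one hρ.pos_s7 (hxy hy hx) i]
    · exact cubeIndex_le_add_one hρ.pos_s7 (hxy hx hy) i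
  calc μ S ≤ ∑ m ∈ box, μ (dyadicCube ρ m) :=
        (measure_mono hcover).trans (measure_biUnion_finset_le _ _)
    _ ≤ box.card • ENNReal.ofReal (C * ρ ^ t) := Finset.sum_le_card_nsmul _ _ _ fun m _ => hμ ρ hρ m
    _ = 3 ^ Fintype.card ι * ENNReal.ofReal (C * ρ ^ t) := by
        have h3 (a : ℤ) : (a + 1 + 1 - (a - 1)).toNat = 3 := by omega
        simp [box, Fintype.card_piFinset, Int.card_Icc, h3, nsmul_eq_mul]

theorem measure_le_of_ediam_le (ht : 0 ≤ t) (hC : 0 ≤ C)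
    (hμ : ∀ ρ, IsDyadicLength ρ → ∀ I, μ (dyadicCube ρ I) ≤ ENNReal.ofReal (C * ρ ^ t))
    {S : Set (ι → ℝ)} {D : ℝ} (hD : 0 < D) (hD1 : D ≤ 1) (hS : Metric.ediam S ≤ ENNReal.ofReal D) :
    μ S ≤ ENNReal.ofReal (3 ^ Fintype.card ι * 2 ^ t * C * D ^ t) := by
  obtain ⟨k, hk, hk1⟩ := exists_nat_pow_near (one_le_one_div hD hD1) one_lt_two
  have hpow : (0 : ℝ) < 2 ^ k := by positivity
  have hρ : IsDyadicLength (1 / 2 ^ k) := ⟨k, by rw [zpow_neg, zpow_natCast, one_div]⟩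
  have hDρ : D ≤ 1 / 2 ^ k := (le_one_div hD hpow).2 hk
  have hρD : 1 / 2 ^ k ≤ 2 * D := by
    rw [div_lt_iff₀ hD, pow_succ] at hk1
    rw [div_le_iff₀ hpow]
    linarith
  calc μ S ≤ 3 ^ Fintype.card ι * ENNReal.ofReal (C * (1 / 2 ^ k) ^ t) :=
        measure_le_of_ediam_le_dyadic hμ hρ (hS.trans (ENNReal.ofReal_le_ofReal hDρ))
    _ ≤ 3 ^ Fintype.card ι * ENNReal.ofReal (C * (2 * D) ^ t) := by
        gcongr
    _ = ENNReal.ofReal (3 ^ Fintype.card ι * 2 ^ t * C * D ^ t) := by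
        rw [← ENNReal.ofReal_ofNat 3, ← ENNReal.ofReal_pow (by norm_num),
          ← ENNReal.ofReal_mul (by positivity), Real.mul_rpow two_pos.le hD.le]
        ring_nf

theorem measure_le_mul_ediam_rpow (ht : 0 < t) (hC : 0 ≤ C)
    (hμ : ∀ ρ, IsDyadicLength ρ → ∀ I, μ (dyadicCube ρ I) ≤ ENNReal.ofReal (C * ρ ^ t))
    {S : Set (ι → ℝ)} (hS : Metric.ediam S ≤ 1) :
    μ S ≤ ENNReal.ofReal (3 ^ Fintype.card ι * 2 ^ t * C) * Metric.ediam S ^ t := by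
  set K : ℝ := 3 ^ Fintype.card ι * 2 ^ t * C
  have hbound {D : ℝ} (hD : 0 < D) (hD1 : D ≤ 1) (hSD : Metric.ediam S ≤ ENNReal.ofReal D) :
      μ S ≤ ENNReal.ofReal (K * D ^ t) :=
    measure_le_of_ediam_le ht.le hC hμ hD hD1 hSD
  rcases eq_or_ne (Metric.ediam S) 0 with h0 | h0
  · rw [h0, ENNReal.zero_rpow_of_pos ht, mul_zero, nonpos_iff_eq_zero]
    have hlim : Tendsto (fun D : ℝ => ENNReal.ofReal (K * D ^ t)) (nhdsWithin 0 (Ioi 0))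
        (nhds 0) := by
      have : ContinuousAt (fun D : ℝ => ENNReal.ofReal (K * D ^ t)) 0 :=
        ENNReal.continuous_ofReal.continuousAt.comp
          (continuousAt_const.mul (Real.continuousAt_rpow_const 0 t (Or.inr ht.le)))
      simpa [Real.zero_rpow ht.ne'] using this.tendsto.mono_left nhdsWithin_le_nhds
    refine le_antisymm (ge_of_tendsto hlim ?_) zero_le
    filter_upwards [Ioo_mem_nhdsGT one_pos] with D hD
    exact hbound hD.1 hD.2.le (h0 ▸ zero_le)
  · have htop : Metric.ediam S ≠ ⊤ := ne_top_of_le_ne_top ENNReal.one_ne_top hS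
    have hD : 0 < (Metric.ediam S).toReal := ENNReal.toReal_pos h0 htop
    calc μ S ≤ ENNReal.ofReal (K * (Metric.ediam S).toReal ^ t) :=
          hbound hD (ENNReal.toReal_le_of_le_ofReal zero_le_one (by simpa using hS))
            (ENNReal.ofReal_toReal htop).ge
      _ = ENNReal.ofReal K * Metric.ediam S ^ t := by
          rw [ENNReal.ofReal_mul (by positivity), ← ENNReal.ofReal_rpow_of_pos hD,
            ENNReal.ofReal_toReal htop]

/-- The mass distribution principle. -/
theorem le_dimH_of_measure_dyadicCube_le {E : Set (ι → ℝ)} (hE : μ E ≠ 0) (ht : 0 < t)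
    (hC : 0 < C)
    (hμ : ∀ ρ, IsDyadicLength ρ → ∀ I, μ (dyadicCube ρ I) ≤ ENNReal.ofReal (C * ρ ^ t)) :
    ENNReal.ofReal t ≤ dimH E := by
  set c := ENNReal.ofReal (3 ^ Fintype.card ι * 2 ^ t * C)
  have hc : c ≠ 0 := by simp only [c, ne_eq, ENNReal.ofReal_eq_zero, not_le]; positivity
  have hle : c⁻¹ • μ ≤ μH[t] := by
    refine Measure.le_hausdorffMeasure t _ 1 one_pos fun S hS => ?_
    calc (c⁻¹ • μ) S ≤ c⁻¹ * (c * Metric.ediam S ^ t) := by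
          rw [Measure.smul_apply, smul_eq_mul]
          gcongr
          exact measure_le_mul_ediam_rpow ht hC.le hμ hS
      _ = Metric.ediam S ^ t := by
          rw [← mul_assoc, ENNReal.inv_mul_cancel hc ENNReal.ofReal_ne_top, one_mul]
  have hH : μH[t] E ≠ 0 := fun h => by
    have := hle E
    rw [h, Measure.smul_apply, smul_eq_mul, nonpos_iff_eq_zero, mul_eq_zero,
      ENNReal.inv_eq_zero] at this
    exact this.elim ENNReal.ofReal_ne_top hE
  exact le_dimH_of_hausdorffMeasure_ne_zero (d := t.toNNReal) (by rwa [Real.coe_toNNReal t ht.le])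

theorem le_dimH_of_forall_measure_dyadicCube_le {E : Set (ι → ℝ)} (hE : μ E ≠ 0) {s : ℝ}
    (hμ : ∀ ε : ℝ, 0 < ε → ∃ C : ℝ, 0 < C ∧ ∀ ρ : ℝ, IsDyadicLength ρ → ∀ I : ι → ℤ,
      μ (dyadicCube ρ I) ≤ ENNReal.ofReal (C * ρ ^ (s - ε))) :
    ENNReal.ofReal s ≤ dimH E := by
  refine le_of_forall_lt_imp_le_of_dense fun c hc => ?_
  have hs : 0 < s := ENNReal.ofReal_pos.1 (zero_le.trans_lt hc)
  have hcs : c.toReal < s := ENNReal.toReal_lt_of_lt_ofReal hc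
  obtain ⟨t, hct, hts⟩ := exists_between (max_lt hcs hs)
  obtain ⟨C, hC, hμC⟩ := hμ (s - t) (by linarith)
  calc c ≤ ENNReal.ofReal t := by
        rw [← ENNReal.ofReal_toReal hc.ne_top]
        exact ENNReal.ofReal_le_ofReal (le_of_max_le_left hct.le)
    _ ≤ dimH E := le_dimH_of_measure_dyadicCube_le hE ((le_max_right _ _).trans_lt hct) hC
        (by simpa only [sub_sub_cancel] using hμC)

end MassDistribution

theorem frostman_bound_general
    (d n : ℕ) (hd : 1 ≤ d) (hn : 2 ≤ n)
    (α : ℝ) (hαd : (d : ℝ) ≤ α)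
    (ε : ℕ → ℝ) (hεpos : ∀ k, 0 < ε k) (hεlim : Filter.Tendsto ε Filter.atTop (nhds 0))
    (C₀ : ℝ) (hC₀ : 0 < C₀)
    (l : ℕ → ℝ) (hldyadic : ∀ k, IsDyadicLength (l k))
    (hlanti : StrictAnti l) (hllim : Filter.Tendsto l Filter.atTop (nhds 0))
    (hlquad : ∀ k, 1 ≤ k → (l k) ^ (ε k) ≤ (l (k - 1)) ^ (2 * (d : ℝ)))
    (r : ℕ → ℝ) (hrdyadic : ∀ k, 1 ≤ k → IsDyadicLength (r k))
    (hrlow : ∀ k, 1 ≤ k → l k ≤ r k)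
    (hrsize : ∀ k, 1 ≤ k →
      r k ≤ C₀ * (l k) ^ (((d : ℝ) * n - α - ε k) / ((d : ℝ) * ((n : ℝ) - 1))))
    (X : ℕ → Set (Fin d → ℝ)) (hX0 : X 0 = unitCube d)
    (hXmono : ∀ k, X (k + 1) ⊆ X k)
    (hXlarge : ∀ k, 1 ≤ k → ∀ m ∈ cubesMeeting (l (k - 1)) (X (k - 1)),
      (1 / 2) * (l (k - 1) / r k) ^ d ≤
        (cubeCount (l k) (X k ∩ dyadicCube (l (k - 1)) m) : ℝ))
    (hXsep : ∀ k, 1 ≤ k → ∀ m' : Fin d → ℤ, ∀ m₁ ∈ cubesMeeting (l k) (X k),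
      ∀ m₂ ∈ cubesMeeting (l k) (X k), dyadicCube (l k) m₁ ⊆ dyadicCube (r k) m' →
        dyadicCube (l k) m₂ ⊆ dyadicCube (r k) m' → m₁ = m₂)
    (μ : MeasureTheory.Measure (Fin d → ℝ))
    (hμ1 : μ (unitCube d) = 1) (hμ2 : μ (unitCube d)ᶜ = 0)
    (hμrec : ∀ k, 1 ≤ k → ∀ J : Fin d → ℤ, dyadicCube (l k) J ⊆ unitCube d →
      ∀ I : Fin d → ℤ, dyadicCube (l k) J ⊆ dyadicCube (l (k - 1)) I →
        (dyadicCube (l k) J ⊆ X k →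
          μ (dyadicCube (l k) J) = μ (dyadicCube (l (k - 1)) I) /
            (cubeCount (l k) (X k ∩ dyadicCube (l (k - 1)) I) : ENNReal)) ∧
        (¬ dyadicCube (l k) J ⊆ X k → μ (dyadicCube (l k) J) = 0))
    :
    (∀ ε' : ℝ, 0 < ε' → ∃ C : ℝ, 0 < C ∧
      ∀ l' : ℝ, IsDyadicLength l' → ∀ I : Fin d → ℤ,
        μ (dyadicCube l' I) ≤ ENNReal.ofReal (C *
          l' ^ (((d : ℝ) * n - α) / ((n : ℝ) - 1) - ε'))) ∧
    ENNReal.ofReal (((d : ℝ) * n - α) / ((n : ℝ) - 1)) ≤ dimH (⋂ k, X k) := by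
  have hn' : (2 : ℝ) ≤ n := by exact_mod_cast hn
  have hsd : ((d : ℝ) * n - α) / ((n : ℝ) - 1) ≤ d := by
    rw [div_le_iff₀ (by linarith)]
    linarith
  have := isProbabilityMeasure_of_compl_eq_zero hμ1 hμ2
  have hXnull : ∀ k, μ (X k)ᶜ = 0
    | 0 => hX0 ▸ hμ2
    | k + 1 => measure_compl_eq_zero_of_null_cubes (hldyadic _) (hldyadic k)
        (hlanti.antitone k.le_succ) hμ2 fun J hJ I hJI => (hμrec (k + 1) k.succ_pos J hJ I hJI).2
  have hstep : ∀ k, 1 ≤ k → ∀ c : ℝ≥0∞, (∀ I, μ (dyadicCube (l (k - 1)) I) ≤ c) →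
      ∀ J, μ (dyadicCube (l k) J) ≤ ENNReal.ofReal (2 * (r k / l (k - 1)) ^ d) * c :=
    fun k hk _ => measure_dyadicCube_le_of_parent (hldyadic k) (hldyadic _)
      (hlanti.antitone (k.sub_le 1)) (hrdyadic k hk).pos_s7
      (by simpa [Nat.sub_add_cancel hk] using hXmono (k - 1)) hμ2 (hXlarge k hk) (hμrec k hk)
  have hlevel : ∀ k, 1 ≤ k → ∀ J, μ (dyadicCube (l k) J) ≤ ENNReal.ofReal
      (2 * C₀ ^ d * l k ^ (((d : ℝ) * n - α) / ((n : ℝ) - 1) - 2 * ε k)) := fun k hk J => by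
    refine (hstep k hk 1 (fun _ => prob_le_one) J).trans ?_
    rw [mul_one, mul_assoc]
    exact ENNReal.ofReal_le_ofReal (mul_le_mul_of_nonneg_left (div_pow_le_mul_rpow hd hn'
      (hεpos k).le hC₀.le (hldyadic k).pos_s7 (hldyadic k).le_one (hldyadic _).pos_s7
      (hrdyadic k hk).pos_s7.le (hlquad k hk) (hrsize k hk)) zero_le_two)
  have hfrost := exists_forall_measure_dyadicCube_le hC₀.le hsd hεlim hldyadic
    hlanti.antitone hllim hrdyadic hrlow hXnull hXsep hstep hlevel
  have hcompl : μ (⋂ k, X k)ᶜ = 0 := by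
    rw [compl_iInter]
    exact measure_iUnion_null hXnull
  exact ⟨hfrost, le_dimH_of_forall_measure_dyadicCube_le
    (measure_ne_zero_of_compl_eq_zero hcompl) hfrost⟩

/-- **Lemma 4.3 and the dimension bound.** `μ` is a Frostman measure of every dimension
below `(dn-α)/(n-1)`, and hence `X = ⋂ X_k` has Hausdorff dimension at least `(dn-α)/(n-1)`. -/
theorem frostman_bound
    (d n : ℕ) (hd : 1 ≤ d) (hn : 2 ≤ n)
    (α : ℝ) (hαd : (d : ℝ) ≤ α) (hαdn : α < (d : ℝ) * n)
    (ε : ℕ → ℝ) (hεpos : ∀ k, 0 < ε k) (hεlim : Filter.Tendsto ε Filter.atTop (nhds 0))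
    (C₀ : ℝ) (hC₀ : 0 < C₀)
    (l : ℕ → ℝ) (hldyadic : ∀ k, IsDyadicLength (l k)) (hl0 : l 0 = 1)
    (hlanti : StrictAnti l) (hllim : Filter.Tendsto l Filter.atTop (nhds 0))
    (hlquad : ∀ k, 1 ≤ k → (l k) ^ (ε k) ≤ (l (k - 1)) ^ (2 * (d : ℝ)))
    (r : ℕ → ℝ) (hrdyadic : ∀ k, 1 ≤ k → IsDyadicLength (r k))
    (hrlow : ∀ k, 1 ≤ k → l k ≤ r k) (hrhigh : ∀ k, 1 ≤ k → r k ≤ l (k - 1))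
    (hrsize : ∀ k, 1 ≤ k →
      r k ≤ C₀ * (l k) ^ (((d : ℝ) * n - α - ε k) / ((d : ℝ) * ((n : ℝ) - 1))))
    (X : ℕ → Set (Fin d → ℝ)) (hX0 : X 0 = unitCube d)
    (hXmono : ∀ k, X (k + 1) ⊆ X k)
    (hXcube : ∀ k, (X k).Nonempty ∧ IsCubeUnion (l k) (X k))
    (hXlarge : ∀ k, 1 ≤ k → ∀ m ∈ cubesMeeting (l (k - 1)) (X (k - 1)),
      (1 / 2) * (l (k - 1) / r k) ^ d ≤
        (cubeCount (l k) (X k ∩ dyadicCube (l (k - 1)) m) : ℝ))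
    (hXsep : ∀ k, 1 ≤ k → ∀ m' : Fin d → ℤ, ∀ m₁ ∈ cubesMeeting (l k) (X k),
      ∀ m₂ ∈ cubesMeeting (l k) (X k), dyadicCube (l k) m₁ ⊆ dyadicCube (r k) m' →
        dyadicCube (l k) m₂ ⊆ dyadicCube (r k) m' → m₁ = m₂)
    (μ : MeasureTheory.Measure (Fin d → ℝ))
    (hμ1 : μ (unitCube d) = 1) (hμ2 : μ (unitCube d)ᶜ = 0)
    (hμrec : ∀ k, 1 ≤ k → ∀ J : Fin d → ℤ, dyadicCube (l k) J ⊆ unitCube d →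
      ∀ I : Fin d → ℤ, dyadicCube (l k) J ⊆ dyadicCube (l (k - 1)) I →
        (dyadicCube (l k) J ⊆ X k →
          μ (dyadicCube (l k) J) = μ (dyadicCube (l (k - 1)) I) /
            (cubeCount (l k) (X k ∩ dyadicCube (l (k - 1)) I) : ENNReal)) ∧
        (¬ dyadicCube (l k) J ⊆ X k → μ (dyadicCube (l k) J) = 0))
    :
    (∀ ε' : ℝ, 0 < ε' → ∃ C : ℝ, 0 < C ∧
      ∀ l' : ℝ, IsDyadicLength l' → ∀ I : Fin d → ℤ,
        μ (dyadicCube l' I) ≤ ENNReal.ofReal (C *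
          l' ^ (((d : ℝ) * n - α) / ((n : ℝ) - 1) - ε'))) ∧
    ENNReal.ofReal (((d : ℝ) * n - α) / ((n : ℝ) - 1)) ≤ dimH (⋂ k, X k) :=
  frostman_bound_general d n hd hn α hαd ε hεpos hεlim C₀ hC₀ l hldyadic hlanti hllim hlquad r
    hrdyadic hrlow hrsize X hX0 hXmono hXlarge hXsep μ hμ1 hμ2 hμrec

end
end
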